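/- Let w ∈ ℝⁿ be a nonzero vector and fix L > 0. Then LCD_{L,n}(w/‖w‖₂) ≥ (1/2)·‖w‖₂/‖w‖_∞. In particular, if κ coordinates of w all have absolute value at least ‖w‖_∞/2, then LCD_{L,n}(w/‖w‖₂) ≥ √κ/4. -/

import Mathlib

/-!
If `θ ‖v‖_∞ ≤ 1/2` then every coordinate of `θ v` is at least as close to `0` as to any other
integer, so `dist(θ v, ℤⁿ) = ‖θ v‖`; and `L √(log₊ (x / L)) ≤ x` always, so such a `θ` never
witnesses the LCD. Hence `LCD_L(v) ≥ 1 / (2 ‖v‖_∞)`, which for `v = w / ‖w‖₂` is the first bound.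
The second follows from `‖w‖₂ ≥ √κ ‖w‖_∞ / 2`.
-/

open MeasureTheory ProbabilityTheory Real
open scoped ENNReal

noncomputable section

namespace Paper

def toE {m : ℕ} (v : Fin m → ℝ) : EuclideanSpace ℝ (Fin m) := WithLp.toLp 2 v

def mulE {m n : ℕ} (M : Matrix (Fin m) (Fin n) ℝ) (x : EuclideanSpace ℝ (Fin n)) :
    EuclideanSpace ℝ (Fin m) := toE (M.mulVec (fun i => x i))

def opNorm {n : ℕ} (M : Matrix (Fin n) (Fin n) ℝ) : ℝ :=
  sSup {r : ℝ | ∃ x : EuclideanSpace ℝ (Fin n), ‖x‖ = 1 ∧ r = ‖mulE M x‖}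

def sMin {n : ℕ} (M : Matrix (Fin n) (Fin n) ℝ) : ℝ :=
  sInf {r : ℝ | ∃ x : EuclideanSpace ℝ (Fin n), ‖x‖ = 1 ∧ r = ‖mulE M x‖}

def suppCard {n : ℕ} (v : EuclideanSpace ℝ (Fin n)) : ℕ := Nat.card {i : Fin n // v i ≠ 0}

def Comp {n : ℕ} (δ ρ : ℝ) : Set (EuclideanSpace ℝ (Fin n)) :=
  {x | ‖x‖ = 1 ∧ ∃ z : EuclideanSpace ℝ (Fin n), (suppCard z : ℝ) ≤ δ * n ∧ ‖x - z‖ ≤ ρ}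

def Incomp {n : ℕ} (δ ρ : ℝ) : Set (EuclideanSpace ℝ (Fin n)) :=
  {x | ‖x‖ = 1 ∧ x ∉ Comp δ ρ}

def logPlus (x : ℝ) : ℝ := max (Real.log x) 0

def LCD {m : ℕ} (L : ℝ) (v : EuclideanSpace ℝ (Fin m)) : ℝ :=
  sInf {θ : ℝ | 0 < θ ∧ ∃ p : Fin m → ℤ,
    ‖θ • v - toE (fun i => (p i : ℝ))‖ < L * Real.sqrt (logPlus (‖θ • v‖ / L))}

def nzd {m : ℕ} (w : EuclideanSpace ℝ (Fin m)) : EuclideanSpace ℝ (Fin m) := ‖w‖⁻¹ • w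

def trunc {n : ℕ} (v : EuclideanSpace ℝ (Fin n)) (σ : Equiv.Perm (Fin n)) (k : ℕ)
    (hk : k ≤ n) : EuclideanSpace ℝ (Fin k) := WithLp.toLp 2 (fun i => v (σ (Fin.castLE hk i)))

def IsOrdering {n : ℕ} (v : EuclideanSpace ℝ (Fin n)) (σ : Equiv.Perm (Fin n)) : Prop :=
  ∀ i j : Fin n, i ≤ j → |v (σ i)| ≤ |v (σ j)|

def TV {n k : ℕ} (v : EuclideanSpace ℝ (Fin n)) (I : Finset (Fin n)) (h : I.card = k) :
    EuclideanSpace ℝ (Fin k) := WithLp.toLp 2 (fun i => v (I.orderIsoOfFin h i))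

def colE {n : ℕ} (A : Matrix (Fin n) (Fin n) ℝ) (l : Fin n) : EuclideanSpace ℝ (Fin n) :=
  WithLp.toLp 2 (fun i => A i l)

def GK {n : ℕ} (K : ℝ) (M : Matrix (Fin n) (Fin n) ℝ) : Set (EuclideanSpace ℝ (Fin n)) :=
  {v | ‖v‖ ≤ 1 ∧ ‖mulE M v‖ ≤ 2 * K * Real.sqrt n}

def EI {n : ℕ} (I : Finset (Fin n)) : Set (EuclideanSpace ℝ (Fin n)) :=
  {v | ∀ i, i ∉ I → v i = 0}

def IsCenteredSubgUnit (ν : Measure ℝ) : Prop :=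
  IsProbabilityMeasure ν ∧ (∫ x, x ∂ν) = 0 ∧ (∫ x, x ^ 2 ∂ν) = 1 ∧
    ∃ B > 0, ∀ t > 0, ν {x : ℝ | t < |x|} ≤ ENNReal.ofReal (2 * Real.exp (-t ^ 2 / B ^ 2))

def IsIIDEntries {n : ℕ} {Ω : Type} [MeasureSpace Ω] (ν : Measure ℝ)
    (R : Ω → Matrix (Fin n) (Fin n) ℝ) : Prop :=
  (∀ i j, Measurable fun ω => R ω i j) ∧
  (∀ i j, Measure.map (fun ω => R ω i j) ℙ = ν) ∧
  iIndepFun (fun ij : Fin n × Fin n => fun ω => R ω ij.1 ij.2) ℙ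

lemma sqrt_logPlus_le {t : ℝ} (ht : 0 ≤ t) : √(logPlus t) ≤ t := by
  rw [sqrt_le_left ht]
  refine max_le ?_ (sq_nonneg t)
  rcases le_total t 1 with h | h
  · exact (log_nonpos ht h).trans (sq_nonneg t)
  · exact (log_le_self ht).trans (le_self_pow₀ h two_ne_zero)

lemma mul_sqrt_logPlus_div_le (L : ℝ) {x : ℝ} (hx : 0 ≤ x) : L * √(logPlus (x / L)) ≤ x := by
  rcases le_or_gt L 0 with hL | hL
  · exact (mul_nonpos_of_nonpos_of_nonneg hL (sqrt_nonneg _)).trans hx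
  · calc L * √(logPlus (x / L)) ≤ L * (x / L) := by
          gcongr; exact sqrt_logPlus_le (div_nonneg hx hL.le)
      _ = x := mul_div_cancel₀ x hL.ne'

lemma abs_le_abs_sub_intCast {x : ℝ} (hx : |x| ≤ 1 / 2) (k : ℤ) : |x| ≤ |x - k| := by
  rcases eq_or_ne k 0 with rfl | hk
  · simp
  · have hk1 : (1 : ℝ) ≤ |(k : ℝ)| := by exact_mod_cast Int.one_le_abs hk
    have := abs_sub_abs_le_abs_sub (k : ℝ) x
    rw [abs_sub_comm] at this
    linarith

lemma EuclideanSpace.norm_le_norm_of_abs_le {ι : Type*} [Fintype ι]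
    {a b : EuclideanSpace ℝ ι} (h : ∀ i, |a i| ≤ |b i|) : ‖a‖ ≤ ‖b‖ := by
  simp only [EuclideanSpace.norm_eq, Real.norm_eq_abs]
  exact sqrt_le_sqrt (Finset.sum_le_sum fun i _ => pow_le_pow_left₀ (abs_nonneg _) (h i) 2)

lemma norm_le_norm_sub_intVec {ι : Type*} [Fintype ι] {x : EuclideanSpace ℝ ι}
    (hx : ∀ i, |x i| ≤ 1 / 2) (p : ι → ℤ) :
    ‖x‖ ≤ ‖x - WithLp.toLp 2 (fun i => (p i : ℝ))‖ :=
  EuclideanSpace.norm_le_norm_of_abs_le fun i => abs_le_abs_sub_intCast (hx i) (p i)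

lemma norm_sub_round_le {ι : Type*} [Fintype ι] (x : EuclideanSpace ℝ ι) :
    ‖x - WithLp.toLp 2 (fun i => (round (x i) : ℝ))‖ ≤ √(Fintype.card ι) / 2 := by
  calc ‖x - WithLp.toLp 2 (fun i => (round (x i) : ℝ))‖
      = √(∑ i, ‖x i - round (x i)‖ ^ 2) := EuclideanSpace.norm_eq _
    _ ≤ √(∑ _i : ι, (1 / 2 : ℝ) ^ 2) := by gcongr with i; exact abs_sub_round (x i)
    _ = √(Fintype.card ι) / 2 := by
      rw [Finset.sum_const, Finset.card_univ, nsmul_eq_mul, sqrt_mul (Nat.cast_nonneg _),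
        sqrt_sq (by norm_num)]
      ring

/-- Rounding `θ v` for `‖θ v‖ = L e^(m/L² + 1)` leaves an error of at most `√m / 2 < √(m + L²)`. -/
lemma exists_mem_LCD_set {m : ℕ} {L : ℝ} (hL : 0 < L) {v : EuclideanSpace ℝ (Fin m)}
    (hv : v ≠ 0) : ∃ θ : ℝ, 0 < θ ∧ ∃ p : Fin m → ℤ,
      ‖θ • v - toE (fun i => (p i : ℝ))‖ < L * √(logPlus (‖θ • v‖ / L)) := by
  have hv0 : 0 < ‖v‖ := norm_pos_iff.mpr hv
  set c : ℝ := m / L ^ 2 + 1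
  set θ := L * exp c / ‖v‖
  have hθ : 0 < θ := by positivity
  refine ⟨θ, hθ, fun i => round ((θ • v) i), ?_⟩
  have hnorm : ‖θ • v‖ / L = exp c := by
    rw [norm_smul, norm_of_nonneg hθ.le, div_mul_cancel₀ _ hv0.ne', mul_div_cancel_left₀ _ hL.ne']
  have hlog : logPlus (exp c) = c := by
    rw [logPlus, log_exp, max_eq_left (by positivity)]
  have hrhs : L * √c = √(m + L ^ 2) := by
    rw [← sqrt_sq hL.le, ← sqrt_mul (sq_nonneg L), sq_sqrt (sq_nonneg L)]
    congr 1
    show L ^ 2 * (m / L ^ 2 + 1) = m + L ^ 2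
    field_simp
  rw [hnorm, hlog, hrhs]
  calc ‖θ • v - toE (fun i => (round ((θ • v) i) : ℝ))‖ ≤ √(Fintype.card (Fin m)) / 2 :=
        norm_sub_round_le (θ • v)
    _ = √m / 2 := by rw [Fintype.card_fin]
    _ < √(m + L ^ 2) := by
      have : √m ≤ √(m + L ^ 2) := sqrt_le_sqrt (by nlinarith)
      have : 0 < √(m + L ^ 2) := sqrt_pos.mpr (by positivity)
      linarith

lemma one_div_two_mul_le_LCD {m : ℕ} {L : ℝ} (hL : 0 < L) {v : EuclideanSpace ℝ (Fin m)}
    (hv : v ≠ 0) {B : ℝ} (hB : ∀ i, |v i| ≤ B) : 1 / (2 * B) ≤ LCD L v := by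
  refine le_csInf (exists_mem_LCD_set hL hv) ?_
  rintro θ ⟨hθ, p, hp⟩
  rcases le_or_gt B 0 with hB0 | hB0
  · exact (div_nonpos_of_nonneg_of_nonpos zero_le_one (by linarith)).trans hθ.le
  by_contra! hθB
  have hθB' : θ * B < 1 / 2 := by
    rw [lt_div_iff₀ (by positivity)] at hθB; linarith
  have hcoord : ∀ i, |(θ • v) i| ≤ 1 / 2 := fun i =>
    calc |(θ • v) i| = θ * |v i| := by simp [abs_mul, abs_of_pos hθ]
      _ ≤ θ * B := by gcongr; exact hB i
      _ ≤ 1 / 2 := hθB'.le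
  have hdist : ‖θ • v‖ ≤ ‖θ • v - toE (fun i => (p i : ℝ))‖ := norm_le_norm_sub_intVec hcoord p
  exact hp.not_ge ((mul_sqrt_logPlus_div_le L (norm_nonneg _)).trans hdist)

lemma sqrt_card_mul_le_norm {ι : Type*} [Fintype ι] (w : EuclideanSpace ℝ ι) (s : Finset ι)
    {c : ℝ} (hc : 0 ≤ c) (hs : ∀ i ∈ s, c ≤ |w i|) : √(s.card) * c ≤ ‖w‖ := by
  rw [← sqrt_sq hc, ← sqrt_mul (Nat.cast_nonneg _), EuclideanSpace.norm_eq]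
  gcongr
  calc (s.card : ℝ) * c ^ 2 = ∑ _i ∈ s, c ^ 2 := by rw [Finset.sum_const, nsmul_eq_mul]
    _ ≤ ∑ i ∈ s, ‖w i‖ ^ 2 := Finset.sum_le_sum fun i hi => by
        rw [Real.norm_eq_abs]; exact pow_le_pow_left₀ hc (hs i hi) 2
    _ ≤ ∑ i, ‖w i‖ ^ 2 := Finset.sum_le_sum_of_subset_of_nonneg (Finset.subset_univ s)
        fun i _ _ => sq_nonneg _

theorem simple_lower_bound_lcd {n : ℕ} (L : ℝ) (hL : 0 < L)
    (w : EuclideanSpace ℝ (Fin n)) (hw : w ≠ 0) :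
    (1/2) * (‖w‖ / ⨆ i, |w i|) ≤ Paper.LCD L (Paper.nzd w) ∧
    ∀ κ : ℕ, ∀ s : Finset (Fin n), s.card = κ →
      (∀ i ∈ s, (⨆ j, |w j|) / 2 ≤ |w i|) →
      Real.sqrt κ / 4 ≤ Paper.LCD L (Paper.nzd w) := by
  set M := ⨆ i, |w i|
  have hle : ∀ i, |w i| ≤ M := le_ciSup (Set.finite_range _).bddAbove
  have hw0 : 0 < ‖w‖ := norm_pos_iff.mpr hw
  have hM : 0 < M := by
    obtain ⟨i, hi⟩ : ∃ i, w i ≠ 0 := not_forall.mp fun h => hw (by ext i; exact h i)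
    exact (abs_pos.mpr hi).trans_le (hle i)
  have hbound : (1/2) * (‖w‖ / M) ≤ LCD L (nzd w) := by
    have hv : nzd w ≠ 0 := smul_ne_zero (inv_ne_zero hw0.ne') hw
    have hvB : ∀ i, |nzd w i| ≤ M / ‖w‖ := fun i => by
      simp only [nzd, PiLp.smul_apply, smul_eq_mul, abs_mul, abs_inv, abs_norm]
      rw [inv_mul_eq_div]; gcongr; exact hle i
    convert one_div_two_mul_le_LCD hL hv hvB using 1
    field_simp
  refine ⟨hbound, fun κ s hκ hs => le_trans ?_ hbound⟩
  calc √κ / 4 = √κ * (M / 2) / (2 * M) := by field_simp; ring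
    _ ≤ ‖w‖ / (2 * M) := by
      gcongr; rw [← hκ]; exact sqrt_card_mul_le_norm w s (by positivity) hs
    _ = 1 / 2 * (‖w‖ / M) := by ring

end Paper
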